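/- arXiv:1606.07474 — 2 statements merged into one kernel-verified Lean document; each statement's English description precedes it below -/
import Mathlib

section
/- For an n×n matrix A over ℂ and X ∈ ℂⁿ with i.i.d. coordinates uniform on the unit circle, |perm(A)| ≤ E[(‖AX‖₁/n)ⁿ]. -/
/-! Glynn's identity: for `X` uniform on the unit circle, `E[X ^ m * conj X] = [m = 1]`. Expanding
`∏ i, conj (X i) * (A X) i` over all maps `f : Fin n → Fin n`, the expectation of the `f`-term
factors over the independent coordinates as `∏ j, E[X j ^ #f⁻¹{j} * conj (X j)]`, which vanishes
unless `f` is a bijection; so the expectation is `perm A`. Since `|X i| = 1`, the triangle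
inequality gives `|perm A| ≤ E ∏ i, |(A X) i|`, and AM–GM bounds the product by `(‖A X‖₁ / n) ^ n`. -/
open MeasureTheory

/-- The permanent of a complex square matrix. -/
noncomputable def perm {n : ℕ} (A : Matrix (Fin n) (Fin n) ℂ) : ℂ :=
  ∑ σ : Equiv.Perm (Fin n), ∏ i, A i (σ i)

/-- The operator 2-norm of a complex square matrix. -/
noncomputable def opNorm {n : ℕ} (A : Matrix (Fin n) (Fin n) ℂ) : ℝ :=
  ‖LinearMap.toContinuousLinearMap (Matrix.toEuclideanLin A)‖

/-- Uniform probability measure parametrizing `n` i.i.d. points of the unit circle. -/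
noncomputable def circleMeasure (n : ℕ) : Measure (Fin n → ℝ) :=
  Measure.pi fun _ => volume.restrict (Set.Icc 0 1)

/-- The random vector with i.i.d. coordinates uniform on the unit circle. -/
noncomputable def Xc {n : ℕ} (θ : Fin n → ℝ) : Fin n → ℂ :=
  fun i => Complex.exp (2 * Real.pi * Complex.I * (θ i))

open Finset Function Complex
open scoped ComplexConjugate Matrix

lemma prod_mul_mulVec_eq_sum {ι R : Type*} [Fintype ι] [DecidableEq ι] [CommSemiring R]
    (A : Matrix ι ι R) (x y : ι → R) :
    ∏ i, y i * (A *ᵥ x) i = ∑ f : ι → ι, (∏ i, A i (f i)) * ∏ j, x j ^ #{i | f i = j} * y j := by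
  simp only [Matrix.mulVec, dotProduct, mul_sum, Fintype.prod_sum]
  refine Fintype.sum_congr _ _ fun f => ?_
  have hfiber : ∏ i, x (f i) = ∏ j, x j ^ #{i | f i = j} := by
    rw [← prod_fiberwise univ f (fun i => x (f i))]
    refine prod_congr rfl fun j _ => ?_
    rw [prod_congr rfl fun i hi => by rw [(mem_filter.1 hi).2], prod_const]
  rw [prod_mul_distrib, prod_mul_distrib, hfiber, prod_mul_distrib]
  ring

lemma card_fiber_eq_one_iff_bijective {α β : Type*} [Fintype α] [DecidableEq β] (f : α → β) :
    (∀ j, #{i | f i = j} = 1) ↔ Bijective f := by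
  simp only [bijective_iff_existsUnique, card_eq_one, eq_singleton_iff_unique_mem, mem_filter,
    mem_univ, true_and]
  rfl

lemma sum_ite_bijective_eq_sum_perm {α M : Type*} [Fintype α] [DecidableEq α] [AddCommMonoid M]
    (g : (α → α) → M) :
    ∑ f : α → α, (if Bijective f then g f else 0) = ∑ σ : Equiv.Perm α, g σ := by
  rw [← sum_filter]
  exact sum_nbij' (fun f => if hf : Bijective f then Equiv.ofBijective f hf else 1) (⇑)
    (by simp) (by simp) (by intro f hf; simp_all) (by intro σ _; simp)
    (by intro f hf; simp_all)

lemma prod_le_arith_mean_pow {ι : Type*} (s : Finset ι) (z : ι → ℝ) (hz : ∀ i ∈ s, 0 ≤ z i) :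
    ∏ i ∈ s, z i ≤ ((∑ i ∈ s, z i) / #s) ^ #s := by
  rcases s.eq_empty_or_nonempty with rfl | hs
  · simp
  have hamgm := Real.geom_mean_le_arith_mean s (fun _ => 1) z (by simp) (by simpa using hs) hz
  simp only [Real.rpow_one, sum_const, nsmul_eq_mul, mul_one, one_mul] at hamgm
  calc ∏ i ∈ s, z i = ((∏ i ∈ s, z i) ^ ((#s : ℝ)⁻¹)) ^ #s :=
        (Real.rpow_inv_natCast_pow (prod_nonneg hz) hs.card_pos.ne').symm
    _ ≤ ((∑ i ∈ s, z i) / #s) ^ #s :=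
        pow_le_pow_left₀ (Real.rpow_nonneg (prod_nonneg hz) _) hamgm _

lemma integral_Icc_exp_two_pi_I_int_mul (k : ℤ) :
    ∫ t in Set.Icc (0 : ℝ) 1, exp (2 * Real.pi * I * k * t) = if k = 0 then 1 else 0 := by
  rw [integral_Icc_eq_integral_Ioc, ← intervalIntegral.integral_of_le zero_le_one]
  split_ifs with hk
  · simp [hk]
  · have hc : (2 * Real.pi * I * k : ℂ) ≠ 0 := by simp [Real.pi_ne_zero, hk]
    rw [integral_exp_mul_complex hc, ofReal_one, mul_one, mul_comm _ (k : ℂ),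
      exp_int_mul_two_pi_mul_I]
    simp

lemma exp_two_pi_I_mul_pow_mul_conj (m : ℕ) (t : ℝ) :
    exp (2 * Real.pi * I * t) ^ m * conj (exp (2 * Real.pi * I * t)) =
      exp (2 * Real.pi * I * ((m - 1 : ℤ) : ℂ) * t) := by
  rw [← exp_nat_mul, ← exp_conj, ← exp_add]
  congr 1
  simp only [map_mul, conj_I, conj_ofReal, map_ofNat]
  push_cast
  ring

lemma integral_Icc_exp_two_pi_I_mul_pow_mul_conj (m : ℕ) :
    ∫ t in Set.Icc (0 : ℝ) 1, exp (2 * Real.pi * I * t) ^ m * conj (exp (2 * Real.pi * I * t)) =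
      if m = 1 then 1 else 0 := by
  simp only [exp_two_pi_I_mul_pow_mul_conj, integral_Icc_exp_two_pi_I_int_mul, sub_eq_zero,
    Nat.cast_eq_one]

@[fun_prop]
lemma continuous_Xc {n : ℕ} : Continuous (Xc : (Fin n → ℝ) → Fin n → ℂ) :=
  continuous_pi fun i => by unfold Xc; fun_prop

lemma norm_Xc {n : ℕ} (θ : Fin n → ℝ) (i : Fin n) : ‖Xc θ i‖ = 1 := by
  rw [Xc, show (2 * Real.pi * I * θ i : ℂ) = (2 * Real.pi * θ i : ℝ) * I by push_cast; ring]
  exact norm_exp_ofReal_mul_I _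

lemma circleMeasure_eq_restrict (n : ℕ) :
    circleMeasure n = volume.restrict (Set.univ.pi fun _ => Set.Icc 0 1) := by
  rw [volume_pi, Measure.restrict_pi_pi, circleMeasure]

lemma Continuous.integrable_circleMeasure {n : ℕ} {E : Type*} [NormedAddCommGroup E]
    {f : (Fin n → ℝ) → E} (hf : Continuous f) : Integrable f (circleMeasure n) := by
  rw [circleMeasure_eq_restrict]
  exact hf.continuousOn.integrableOn_compact (isCompact_univ_pi fun _ => isCompact_Icc)

lemma integral_circleMeasure_prod {n : ℕ} (g : Fin n → ℝ → ℂ) :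
    ∫ θ, ∏ j, g j (θ j) ∂circleMeasure n = ∏ j, ∫ t in Set.Icc 0 1, g j t :=
  integral_fintype_prod_eq_prod g

theorem integral_prod_conj_mul_mulVec_Xc_eq_perm {n : ℕ} (A : Matrix (Fin n) (Fin n) ℂ) :
    ∫ θ, ∏ i, conj (Xc θ i) * (A *ᵥ Xc θ) i ∂circleMeasure n = perm A := by
  calc ∫ θ, ∏ i, conj (Xc θ i) * (A *ᵥ Xc θ) i ∂circleMeasure n
      = ∑ f : Fin n → Fin n, ∫ θ, (∏ i, A i (f i)) *
          ∏ j, Xc θ j ^ #{i | f i = j} * conj (Xc θ j) ∂circleMeasure n := by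
        simp_rw [prod_mul_mulVec_eq_sum]
        exact integral_finsetSum _ fun f _ => Continuous.integrable_circleMeasure (by fun_prop)
    _ = ∑ f : Fin n → Fin n, (∏ i, A i (f i)) * if Bijective f then 1 else 0 := by
        refine Fintype.sum_congr _ _ fun f => ?_
        simp only [integral_const_mul, Xc]
        rw [integral_circleMeasure_prod fun j t =>
          exp (2 * Real.pi * I * t) ^ #{i | f i = j} * conj (exp (2 * Real.pi * I * t))]
        simp only [integral_Icc_exp_two_pi_I_mul_pow_mul_conj, prod_boole, mem_univ, true_implies,
          card_fiber_eq_one_iff_bijective]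
    _ = perm A := by
        simp only [mul_ite, mul_one, mul_zero, sum_ite_bijective_eq_sum_perm]
        rfl

/-- `|perm A| ≤ E[(‖AX‖₁/n)^n]` for X i.i.d. uniform on the unit circle. -/
theorem perm_le_expectation_l1 {n : ℕ} (A : Matrix (Fin n) (Fin n) ℂ) :
    ‖perm A‖ ≤
      ∫ θ, ((∑ i, ‖(A.mulVec (Xc θ)) i‖) / n) ^ n ∂(circleMeasure n) := by
  calc ‖perm A‖ = ‖∫ θ, ∏ i, conj (Xc θ i) * (A *ᵥ Xc θ) i ∂circleMeasure n‖ := by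
        rw [integral_prod_conj_mul_mulVec_Xc_eq_perm]
    _ ≤ ∫ θ, ‖∏ i, conj (Xc θ i) * (A *ᵥ Xc θ) i‖ ∂circleMeasure n :=
        norm_integral_le_integral_norm _
    _ = ∫ θ, ∏ i, ‖(A *ᵥ Xc θ) i‖ ∂circleMeasure n := by
        simp only [norm_prod, norm_mul, norm_conj, norm_Xc, one_mul]
    _ ≤ ∫ θ, ((∑ i, ‖(A *ᵥ Xc θ) i‖) / n) ^ n ∂circleMeasure n := by
        refine integral_mono (by fun_prop : Continuous _).integrable_circleMeasure
          (by fun_prop : Continuous _).integrable_circleMeasure fun θ => ?_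
        simpa using prod_le_arith_mean_pow univ _ fun i _ => norm_nonneg ((A *ᵥ Xc θ) i)
end

section
/- If A is an n×n matrix over ℂ with ‖A‖₂ ≤ 1 and h_∞(A) = 1, then A is a permutation matrix times a unitary diagonal matrix. -/
/-! An ℓ²-contraction has every column of Euclidean norm at most 1 (columns are images of basis
vectors), and likewise every row (rows are columns of `Aᴴ`, which has the same operator norm). So
all entries have modulus at most 1, and `h∞(A) = 1` forces every row to contain an entry of
modulus 1. The row bound then kills the rest of that row, and the column bound puts these entries
in distinct columns. -/
open MeasureTheory

/-- Average of the ℓ∞-norms of the rows of A. -/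
noncomputable def hInf {n : ℕ} (A : Matrix (Fin n) (Fin n) ℂ) : ℝ :=
  (∑ i, ⨆ j, ‖A i j‖) / n

/-- Average of the ℓ₂-norms of the rows of A. -/
noncomputable def hTwo {n : ℕ} (A : Matrix (Fin n) (Fin n) ℂ) : ℝ :=
  (∑ i, Real.sqrt (∑ j, ‖A i j‖ ^ 2)) / n

open scoped Matrix.Norms.L2Operator

lemma opNorm_eq_l2_opNorm {n : ℕ} (A : Matrix (Fin n) (Fin n) ℂ) : opNorm A = ‖A‖ := rfl

section Vector

variable {ι E : Type*} [Fintype ι] [SeminormedAddCommGroup E] {v : ι → E}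

lemma norm_le_one_of_sum_norm_sq_le_one (hv : ∑ j, ‖v j‖ ^ 2 ≤ 1) (j : ι) :
    ‖v j‖ ≤ 1 := by
  have : ‖v j‖ ^ 2 ≤ 1 :=
    (Finset.single_le_sum (fun k _ => sq_nonneg ‖v k‖) (Finset.mem_univ j)).trans hv
  exact (pow_le_one_iff_of_nonneg (norm_nonneg _) two_ne_zero).mp this

lemma norm_eq_zero_of_sum_norm_sq_le_one_of_norm_eq_one (hv : ∑ j, ‖v j‖ ^ 2 ≤ 1) {k : ι}
    (hk : ‖v k‖ = 1) {j : ι} (hjk : j ≠ k) : ‖v j‖ = 0 := by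
  have : ‖v j‖ ^ 2 + ‖v k‖ ^ 2 ≤ ∑ i, ‖v i‖ ^ 2 :=
    Finset.add_le_sum (fun i _ => sq_nonneg ‖v i‖) (Finset.mem_univ j) (Finset.mem_univ k) hjk
  rw [hk] at this
  nlinarith [norm_nonneg (v j)]

end Vector

namespace Matrix

variable {m n 𝕜 : Type*} [Fintype m] [Fintype n] [DecidableEq n] [RCLike 𝕜]

lemma sum_norm_sq_col_le_l2_opNorm_sq (A : Matrix m n 𝕜) (j : n) :
    ∑ i, ‖A i j‖ ^ 2 ≤ ‖A‖ ^ 2 := by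
  have h := A.l2_opNorm_mulVec (EuclideanSpace.single j 1)
  rw [PiLp.norm_single, norm_one, mul_one] at h
  have h2 := pow_le_pow_left₀ (norm_nonneg _) h 2
  rw [EuclideanSpace.norm_sq_eq] at h2
  simpa [mulVec_single] using h2

lemma sum_norm_sq_row_le_l2_opNorm_sq [DecidableEq m] (A : Matrix m n 𝕜) (i : m) :
    ∑ j, ‖A i j‖ ^ 2 ≤ ‖A‖ ^ 2 := by
  simpa [l2_opNorm_conjTranspose] using Aᴴ.sum_norm_sq_col_le_l2_opNorm_sq i

end Matrix

theorem Matrix.exists_eq_permMatrix_mul_diagonal {n 𝕜 : Type*} [Fintype n] [DecidableEq n]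
    [NormedRing 𝕜] (A : Matrix n n 𝕜)
    (hrow : ∀ i, ∑ j, ‖A i j‖ ^ 2 ≤ 1) (hcol : ∀ j, ∑ i, ‖A i j‖ ^ 2 ≤ 1)
    (hone : ∀ i, ∃ j, ‖A i j‖ = 1) :
    ∃ (σ : Equiv.Perm n) (d : n → 𝕜),
      (∀ i, ‖d i‖ = 1) ∧ A = σ.permMatrix 𝕜 * Matrix.diagonal d := by
  choose f hf using hone
  have hinj : f.Injective := fun a b hab => by
    by_contra hne
    have hb :=
      norm_eq_zero_of_sum_norm_sq_le_one_of_norm_eq_one (hcol (f a)) (hf a) (Ne.symm hne)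
    rw [hab, hf b] at hb
    exact one_ne_zero hb
  let σ := Equiv.ofBijective f hinj.bijective_of_finite
  have hσ : ∀ i, ‖A i (σ i)‖ = 1 := hf
  refine ⟨σ, fun j => A (σ.symm j) j, fun j => by simpa using hσ (σ.symm j), ?_⟩
  rw [Equiv.Perm.permMatrix, PEquiv.toMatrix_toPEquiv_mul]
  ext i j
  by_cases hij : σ i = j
  · subst hij
    simp
  · have hzero :=
      norm_eq_zero_of_sum_norm_sq_le_one_of_norm_eq_one (hrow i) (hσ i) (Ne.symm hij)
    simp [Matrix.diagonal_apply_ne _ hij, norm_eq_zero.mp hzero]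

lemma exists_norm_eq_one_of_hInf_eq_one {n : ℕ} {A : Matrix (Fin n) (Fin n) ℂ}
    (hle : ∀ i j, ‖A i j‖ ≤ 1) (h : hInf A = 1) (i : Fin n) : ∃ j, ‖A i j‖ = 1 := by
  have : Nonempty (Fin n) := ⟨i⟩
  have hsup : ∀ i, ⨆ j, ‖A i j‖ ≤ 1 := fun i => ciSup_le (hle i)
  have hsum : ∑ i, ⨆ j, ‖A i j‖ = ∑ _i : Fin n, 1 := by
    rw [hInf, div_eq_one_iff_eq (by simp [i.pos.ne'])] at h
    simpa using h
  obtain ⟨j, hj⟩ := exists_eq_ciSup_of_finite (f := fun j => ‖A i j‖)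
  exact ⟨j, hj.trans <|
    (Finset.sum_eq_sum_iff_of_le fun i _ => hsup i).mp hsum i (Finset.mem_univ i)⟩

/-- If `‖A‖₂ ≤ 1` and `h∞(A) = 1`, then A is a permutation matrix times a unitary
diagonal matrix. -/
theorem hInf_eq_one_extremal {n : ℕ} (A : Matrix (Fin n) (Fin n) ℂ)
    (hA : opNorm A ≤ 1) (h : hInf A = 1) :
    ∃ (σ : Equiv.Perm (Fin n)) (d : Fin n → ℂ),
      (∀ i, ‖d i‖ = 1) ∧ A = σ.permMatrix ℂ * Matrix.diagonal d := by
  have hA_sq : ‖A‖ ^ 2 ≤ 1 := pow_le_one₀ (norm_nonneg _) (opNorm_eq_l2_opNorm A ▸ hA)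
  have hrow (i) : ∑ j, ‖A i j‖ ^ 2 ≤ 1 := (A.sum_norm_sq_row_le_l2_opNorm_sq i).trans hA_sq
  have hcol (j) : ∑ i, ‖A i j‖ ^ 2 ≤ 1 := (A.sum_norm_sq_col_le_l2_opNorm_sq j).trans hA_sq
  refine A.exists_eq_permMatrix_mul_diagonal hrow hcol ?_
  exact exists_norm_eq_one_of_hInf_eq_one (fun i => norm_le_one_of_sum_norm_sq_le_one (hrow i)) h
end
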